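/- Let μ > 0 and ω > μ²/4, and define Q_{ω,μ} : ℝ → ℝ by Q_{ω,μ}(x) = (3ω)^{1/4} · (sech(2√ω·|x| + arctanh(μ/(2√ω))))^{1/2}. Then Q_{ω,μ} is positive, even, continuous on ℝ, infinitely differentiable on ℝ \ {0}, satisfies Q_{ω,μ}''(x) − ω·Q_{ω,μ}(x) + Q_{ω,μ}(x)^5 = 0 for every x ≠ 0, and its one-sided derivatives at the origin exist and satisfy the jump condition lim_{x→0⁺} Q_{ω,μ}'(x) − lim_{x→0⁻} Q_{ω,μ}'(x) = −μ·Q_{ω,μ}(0). -/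

import Mathlib

open Real Filter


/-- The inverse hyperbolic tangent: `arctanh y = (1/2) log((1+y)/(1−y))`. -/
noncomputable def arctanh (y : ℝ) : ℝ := (1 / 2) * Real.log ((1 + y) / (1 - y))

/-- The solitary-wave profile of the quintic NLS with attractive delta potential:
`Q_{ω,μ}(x) = (3ω)^{1/4}(sech(2√ω|x| + arctanh(μ/(2√ω))))^{1/2}`. -/
noncomputable def Qsol (μ ω x : ℝ) : ℝ :=
  (3 * ω) ^ ((1 : ℝ) / 4) *
    (1 / Real.cosh (2 * Real.sqrt ω * |x| + arctanh (μ / (2 * Real.sqrt ω)))) ^ ((1 : ℝ) / 2)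

noncomputable def gfun (t : ℝ) : ℝ := Real.exp (-(1/2) * Real.log (Real.cosh t))
noncomputable def gder (t : ℝ) : ℝ := -(1/2) * (Real.sinh t / Real.cosh t) * gfun t
lemma gfun_pos (t : ℝ) : 0 < gfun t := Real.exp_pos _
lemma gfun_eq (t : ℝ) : (1 / Real.cosh t) ^ ((1:ℝ)/2) = gfun t := by
  rw [Real.rpow_def_of_pos (by positivity), gfun, one_div, Real.log_inv]; ring_nf
lemma hasDerivAt_gfun (t : ℝ) : HasDerivAt gfun (gder t) t := by
  have h1 : HasDerivAt Real.cosh (Real.sinh t) t := Real.hasDerivAt_cosh t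
  have h2 : HasDerivAt Real.log (Real.cosh t)⁻¹ (Real.cosh t) :=
    Real.hasDerivAt_log (Real.cosh_pos t).ne'
  have h4 := ((h2.comp t h1).const_mul (-(1/2) : ℝ)).exp
  refine h4.congr_deriv ?_
  unfold gder gfun; simp only [Function.comp_apply]; field_simp
lemma gfun_pow4 (t : ℝ) : gfun t ^ 4 * Real.cosh t ^ 2 = 1 := by
  have hc := Real.cosh_pos t
  have hcL : Real.cosh t = Real.exp (Real.log (Real.cosh t)) := (Real.exp_log hc).symm
  rw [gfun, ← Real.exp_nat_mul, hcL, ← Real.exp_nat_mul, ← Real.exp_add]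
  norm_num
  ring
lemma hasDerivAt_gder (t : ℝ) :
    HasDerivAt gder (gfun t / 4 - 3/4 * gfun t ^ 5) t := by
  have hc : Real.cosh t ≠ 0 := (Real.cosh_pos t).ne'
  have h1 : HasDerivAt (fun t => Real.sinh t / Real.cosh t)
      ((Real.cosh t * Real.cosh t - Real.sinh t * Real.sinh t) / Real.cosh t ^ 2) t :=
    (Real.hasDerivAt_sinh t).div (Real.hasDerivAt_cosh t) hc
  have h2 := ((h1.mul (hasDerivAt_gfun t)).const_mul (-(1/2) : ℝ))
  have hfe : gder = fun y => -(1/2) * (Real.sinh y / Real.cosh y * gfun y) := by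
    funext y; unfold gder; ring
  rw [hfe]
  refine h2.congr_deriv ?_
  rw [hfe]
  simp only []
  have hs : Real.cosh t ^ 2 - Real.sinh t ^ 2 = 1 := Real.cosh_sq_sub_sinh_sq t
  have h4 := gfun_pow4 t
  have hg5 : gfun t ^ 5 * Real.cosh t ^ 2 = gfun t := by linear_combination gfun t * h4
  field_simp
  linear_combination 12 * hg5 - (12 * gfun t) * hs
lemma continuous_gfun : Continuous gfun :=
  Real.continuous_exp.comp (continuous_const.mul
    (Real.continuous_cosh.log (fun t => (Real.cosh_pos t).ne')))
lemma continuous_gder : Continuous gder :=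
  ((continuous_const.mul (Real.continuous_sinh.div Real.continuous_cosh
    (fun t => (Real.cosh_pos t).ne'))).mul continuous_gfun)
lemma contDiff_gfun : ContDiff ℝ (⊤ : ℕ∞) gfun :=
  Real.contDiff_exp.comp (contDiff_const.mul
    (Real.contDiff_cosh.log (fun t => (Real.cosh_pos t).ne')))
lemma tanh_arctanh {y : ℝ} (h1 : -1 < y) (h2 : y < 1) : Real.tanh (arctanh y) = y := by
  have hr : 0 < (1 + y) / (1 - y) := div_pos (by linarith) (by linarith)
  set t := arctanh y with ht
  have hE : Real.exp t ^ 2 = (1 + y) / (1 - y) := by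
    rw [ht, arctanh, ← Real.exp_nat_mul]
    rw [show ((2:ℕ):ℝ) * (1/2 * Real.log ((1+y)/(1-y))) = Real.log ((1+y)/(1-y)) by push_cast; ring]
    exact Real.exp_log hr
  have hE0 : Real.exp t ≠ 0 := (Real.exp_pos t).ne'
  have key : Real.exp t ^ 2 * (1 - y) = 1 + y := by
    rw [hE, div_mul_cancel₀ _ (by linarith : (1:ℝ)-y ≠ 0)]
  rw [Real.tanh_eq_sinh_div_cosh, Real.sinh_eq, Real.cosh_eq, Real.exp_neg]
  have hden : Real.exp t + (Real.exp t)⁻¹ ≠ 0 := by positivity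
  rw [div_div_div_eq]
  field_simp
  linear_combination key
lemma hasDerivAt_Q1 (A b a x : ℝ) :
    HasDerivAt (fun y => A * gfun (b*y + a)) (A * b * gder (b*x + a)) x := by
  have hin : HasDerivAt (fun y : ℝ => b*y + a) b x := by
    simpa using ((hasDerivAt_id x).const_mul b).add_const a
  have := ((hasDerivAt_gfun (b*x+a)).comp x hin).const_mul A
  refine this.congr_deriv ?_
  ring
lemma hasDerivAt_Q2 (A b a x : ℝ) :
    HasDerivAt (fun y => A * b * gder (b*y + a))
      (A * b * b * (gfun (b*x+a)/4 - 3/4 * gfun (b*x+a)^5)) x := by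
  have hin : HasDerivAt (fun y : ℝ => b*y + a) b x := by
    simpa using ((hasDerivAt_id x).const_mul b).add_const a
  have := ((hasDerivAt_gder (b*x+a)).comp x hin).const_mul (A*b)
  refine this.congr_deriv ?_
  ring

set_option maxHeartbeats 2000000 in
lemma main_aux (μ ω a c A : ℝ) (hω0 : 0 < ω) (hc0 : 0 < c) (hA0 : 0 < A)
    (hcc : c * c = 4 * ω) (hA4 : A ^ 4 = 3 * ω)
    (htanh : Real.sinh a / Real.cosh a = μ / c)
    (hQ : ∀ x : ℝ, Qsol μ ω x = A * gfun (c * |x| + a)) :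
    (∀ x : ℝ, 0 < Qsol μ ω x) ∧
    (∀ x : ℝ, Qsol μ ω (-x) = Qsol μ ω x) ∧
    Continuous (Qsol μ ω) ∧
    ContDiffOn ℝ (⊤ : ℕ∞) (Qsol μ ω) {(0 : ℝ)}ᶜ ∧
    (∀ x : ℝ, x ≠ 0 →
      deriv (deriv (Qsol μ ω)) x - ω * Qsol μ ω x + (Qsol μ ω x) ^ 5 = 0) ∧
    ∃ dp dm : ℝ,
      Tendsto (deriv (Qsol μ ω)) (nhdsWithin 0 (Set.Ioi 0)) (nhds dp) ∧
      Tendsto (deriv (Qsol μ ω)) (nhdsWithin 0 (Set.Iio 0)) (nhds dm) ∧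
      dp - dm = -μ * Qsol μ ω 0 := by
  have hevp : ∀ x : ℝ, 0 < x → Qsol μ ω =ᶠ[nhds x] (fun y => A * gfun (c*y+a)) := by
    intro x hx
    filter_upwards [isOpen_Ioi.mem_nhds (Set.mem_Ioi.mpr hx)] with y hy
    rw [hQ y, abs_of_pos hy]
  have hevm : ∀ x : ℝ, x < 0 → Qsol μ ω =ᶠ[nhds x] (fun y => A * gfun ((-c)*y+a)) := by
    intro x hx
    filter_upwards [isOpen_Iio.mem_nhds (Set.mem_Iio.mpr hx)] with y hy
    rw [hQ y, abs_of_neg hy]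
    congr 1
    ring
  refine ⟨fun x => ?_, fun x => ?_, ?_, ?_, ?_, ?_⟩
  · rw [hQ x]; exact mul_pos hA0 (gfun_pos _)
  · rw [hQ x, hQ (-x), abs_neg]
  · have hQf : Qsol μ ω = fun x => A * gfun (c*|x|+a) := funext hQ
    rw [hQf]
    exact continuous_const.mul (continuous_gfun.comp
      ((continuous_const.mul continuous_abs).add continuous_const))
  · have hGp : ContDiff ℝ (⊤ : ℕ∞) (fun y : ℝ => A * gfun (c*y+a)) :=
      contDiff_const.mul (contDiff_gfun.comp
        ((contDiff_const.mul contDiff_id).add contDiff_const))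
    have hGm : ContDiff ℝ (⊤ : ℕ∞) (fun y : ℝ => A * gfun ((-c)*y+a)) :=
      contDiff_const.mul (contDiff_gfun.comp
        ((contDiff_const.mul contDiff_id).add contDiff_const))
    intro x hx
    have hx' : x ≠ 0 := hx
    rcases hx'.lt_or_gt with h | h
    · exact (hGm.contDiffAt.congr_of_eventuallyEq (hevm x h)).contDiffWithinAt
    · exact (hGp.contDiffAt.congr_of_eventuallyEq (hevp x h)).contDiffWithinAt
  · intro x hx
    rcases hx.lt_or_gt with h | h
    · have hev := hevm x h
      have hd1 : deriv (Qsol μ ω) =ᶠ[nhds x] deriv (fun y => A * gfun ((-c)*y+a)) := hev.deriv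
      have hder : deriv (fun y => A * gfun ((-c)*y+a)) = fun y => A * (-c) * gder ((-c)*y+a) :=
        funext fun y => (hasDerivAt_Q1 A (-c) a y).deriv
      have h2 : deriv (deriv (Qsol μ ω)) x
          = A*(-c)*(-c)*(gfun ((-c)*x+a)/4 - 3/4 * gfun ((-c)*x+a)^5) := by
        rw [hd1.deriv_eq, hder, (hasDerivAt_Q2 A (-c) a x).deriv]
      have hax : c * |x| + a = (-c)*x + a := by rw [abs_of_neg h]; ring
      rw [h2, hQ x, hax]
      linear_combination (A*(gfun ((-c)*x+a)/4 - 3/4*gfun ((-c)*x+a)^5)) * hcc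
        + (A * gfun ((-c)*x+a)^5) * hA4
    · have hev := hevp x h
      have hd1 : deriv (Qsol μ ω) =ᶠ[nhds x] deriv (fun y => A * gfun (c*y+a)) := hev.deriv
      have hder : deriv (fun y => A * gfun (c*y+a)) = fun y => A * c * gder (c*y+a) :=
        funext fun y => (hasDerivAt_Q1 A c a y).deriv
      have h2 : deriv (deriv (Qsol μ ω)) x
          = A*c*c*(gfun (c*x+a)/4 - 3/4 * gfun (c*x+a)^5) := by
        rw [hd1.deriv_eq, hder, (hasDerivAt_Q2 A c a x).deriv]
      rw [h2, hQ x, abs_of_pos h]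
      linear_combination (A*(gfun (c*x+a)/4 - 3/4*gfun (c*x+a)^5)) * hcc
        + (A * gfun (c*x+a)^5) * hA4
  · refine ⟨A*c*gder a, A*(-c)*gder a, ?_, ?_, ?_⟩
    · have hcont : Continuous (fun y => A*c*gder (c*y+a)) :=
        continuous_const.mul (continuous_gder.comp
          ((continuous_const.mul continuous_id).add continuous_const))
      have h0 : Tendsto (fun y => A*c*gder (c*y+a)) (nhdsWithin 0 (Set.Ioi 0))
          (nhds (A*c*gder a)) := by
        have h1 := hcont.tendsto 0
        simp only [mul_zero, zero_add] at h1
        exact h1.mono_left nhdsWithin_le_nhds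
      refine Tendsto.congr' ?_ h0
      filter_upwards [self_mem_nhdsWithin] with y hy
      have hev := hevp y hy
      rw [hev.deriv_eq, (hasDerivAt_Q1 A c a y).deriv]
    · have hcont : Continuous (fun y => A*(-c)*gder ((-c)*y+a)) :=
        continuous_const.mul (continuous_gder.comp
          ((continuous_const.mul continuous_id).add continuous_const))
      have h0 : Tendsto (fun y => A*(-c)*gder ((-c)*y+a)) (nhdsWithin 0 (Set.Iio 0))
          (nhds (A*(-c)*gder a)) := by
        have h1 := hcont.tendsto 0
        simp only [mul_zero, zero_add, neg_zero] at h1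
        exact h1.mono_left nhdsWithin_le_nhds
      refine Tendsto.congr' ?_ h0
      filter_upwards [self_mem_nhdsWithin] with y hy
      have hev := hevm y hy
      rw [hev.deriv_eq, (hasDerivAt_Q1 A (-c) a y).deriv]
    · have hgd : gder a = -(1/2) * (μ/c) * gfun a := by
        unfold gder; rw [htanh]
      rw [hQ 0]
      simp only [abs_zero, mul_zero, zero_add]
      rw [hgd]
      field_simp
      ring


/-- For `μ > 0` and `ω > μ²/4`, `Q_{ω,μ}` is positive, even, continuous, smooth away
from the origin, satisfies `Q'' − ωQ + Q⁵ = 0` for `x ≠ 0`, and its one-sided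
derivatives at `0` exist with jump `−μ·Q_{ω,μ}(0)` (the delta potential condition). -/
theorem delta_soliton_properties (μ ω : ℝ) (hμ : 0 < μ) (hω : μ ^ 2 / 4 < ω) :
    (∀ x : ℝ, 0 < Qsol μ ω x) ∧
    (∀ x : ℝ, Qsol μ ω (-x) = Qsol μ ω x) ∧
    Continuous (Qsol μ ω) ∧
    ContDiffOn ℝ (⊤ : ℕ∞) (Qsol μ ω) {(0 : ℝ)}ᶜ ∧
    (∀ x : ℝ, x ≠ 0 →
      deriv (deriv (Qsol μ ω)) x - ω * Qsol μ ω x + (Qsol μ ω x) ^ 5 = 0) ∧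
    ∃ dp dm : ℝ,
      Tendsto (deriv (Qsol μ ω)) (nhdsWithin 0 (Set.Ioi 0)) (nhds dp) ∧
      Tendsto (deriv (Qsol μ ω)) (nhdsWithin 0 (Set.Iio 0)) (nhds dm) ∧
      dp - dm = -μ * Qsol μ ω 0 := by
  have hω4 : 0 < μ ^ 2 / 4 := by positivity
  have hω0 : 0 < ω := lt_trans hω4 hω
  have hs0 : 0 < Real.sqrt ω := Real.sqrt_pos.mpr hω0
  have hc0 : (0:ℝ) < 2 * Real.sqrt ω := by positivity
  have hA0 : 0 < (3*ω) ^ ((1:ℝ)/4) := Real.rpow_pos_of_pos (by positivity) _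
  have hcc : (2 * Real.sqrt ω) * (2 * Real.sqrt ω) = 4 * ω := by
    have h := Real.mul_self_sqrt hω0.le
    linear_combination 4 * h
  have hA4 : ((3*ω) ^ ((1:ℝ)/4)) ^ 4 = 3 * ω := by
    rw [← Real.rpow_natCast _ 4, ← Real.rpow_mul (by positivity)]
    norm_num
  have hμ2 : μ / 2 < Real.sqrt ω := by
    apply (Real.lt_sqrt (by positivity)).mpr
    calc (μ/2)^2 = μ^2/4 := by ring
    _ < ω := hω
  have hy1 : μ / (2 * Real.sqrt ω) < 1 := (div_lt_one hc0).mpr (by linarith)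
  have hy0 : -1 < μ / (2 * Real.sqrt ω) := by
    have := div_pos hμ hc0; linarith
  have htanh : Real.sinh (arctanh (μ / (2 * Real.sqrt ω))) /
      Real.cosh (arctanh (μ / (2 * Real.sqrt ω))) = μ / (2 * Real.sqrt ω) := by
    rw [← Real.tanh_eq_sinh_div_cosh]
    exact tanh_arctanh hy0 hy1
  have hQ : ∀ x : ℝ, Qsol μ ω x
      = (3*ω) ^ ((1:ℝ)/4) * gfun (2 * Real.sqrt ω * |x| + arctanh (μ / (2 * Real.sqrt ω))) := by
    intro x; rw [Qsol, gfun_eq]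
  exact main_aux μ ω _ _ _ hω0 hc0 hA0 hcc hA4 htanh hQ
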